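/- arXiv:1208.1211 — 2 statements merged into one kernel-verified Lean document; each statement's English description precedes it below -/
import Mathlib

section
/- Under the noise assumption that for all integers k ≥ 2, E[|ξ_i|^k | X_i] ≤ (k!/2) σ² L^{k−2}, and boundedness ‖ψ*‖_∞ ≤ C and ‖ψ‖_∞ ≤ C with C > max(1, σ), the variables T_i = −(Y_i − ψ(X_i))² + (Y_i − ψ*(X_i))² satisfy ∑_{i=1}^n E[T_i²] ≤ 8n(σ² + C²)(R(ψ) − R(ψ*)). -/
/-!
With `ξ = Y - ψ*(X)` and `d = ψ(X) - ψ*(X)` the excess loss factors as `T = d (2ξ - d)`, so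
`T² ≤ 8 d² ξ² + 2 d⁴ ≤ 8 d² ξ² + 8 C² d²`. As `d` is a bounded function of `X`, conditioning
on `X` gives `E[d² ξ²] = E[d² E[ξ² | X]] ≤ σ² E[d²]` and `E[d ξ] = 0`; the latter is the
Pythagorean identity `R(ψ) - R(ψ*) = E[d²]`. Identical distribution makes `E[d²]` the same
for every observation.
-/

open MeasureTheory ProbabilityTheory Real

theorem sq_neg_sq_add_sq_le {y a b B : ℝ} (hab : |a - b| ≤ B) :
    (-(y - a) ^ 2 + (y - b) ^ 2) ^ 2
      ≤ 8 * ((a - b) ^ 2 * (y - b) ^ 2) + 2 * B ^ 2 * (a - b) ^ 2 := by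
  have hd : (a - b) ^ 2 ≤ B ^ 2 := sq_le_sq' (abs_le.1 hab).1 (abs_le.1 hab).2
  have hfactor : -(y - a) ^ 2 + (y - b) ^ 2 = (a - b) * (2 * (y - b) - (a - b)) := by ring
  have hparallelogram : (2 * (y - b) - (a - b)) ^ 2 ≤ 8 * (y - b) ^ 2 + 2 * (a - b) ^ 2 := by
    nlinarith [sq_nonneg (2 * (y - b) + (a - b))]
  rw [hfactor, mul_pow]
  nlinarith [mul_le_mul_of_nonneg_left hparallelogram (sq_nonneg (a - b)),
    mul_le_mul_of_nonneg_left hd (sq_nonneg (a - b))]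

section CondExp

variable {Ω : Type*} {m mΩ : MeasurableSpace Ω} {μ : Measure Ω} [IsFiniteMeasure μ]
  {f g : Ω → ℝ} {c : ℝ}

theorem integral_mul_eq_integral_mul_condExp (hm : m ≤ mΩ) (hf : StronglyMeasurable[m] f)
    (hf_bound : ∀ᵐ ω ∂μ, ‖f ω‖ ≤ c) (hg : Integrable g μ) :
    ∫ ω, f ω * g ω ∂μ = ∫ ω, f ω * μ[g | m] ω ∂μ :=
  (integral_condExp hm).symm.trans
    (integral_congr_ae (condExp_stronglyMeasurable_mul_of_bound hm hf hg c hf_bound))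

theorem integral_mul_eq_zero_of_condExp_eq_zero (hm : m ≤ mΩ) (hf : StronglyMeasurable[m] f)
    (hf_bound : ∀ᵐ ω ∂μ, ‖f ω‖ ≤ c) (hg : Integrable g μ)
    (hg_zero : μ[g | m] =ᵐ[μ] 0) :
    ∫ ω, f ω * g ω ∂μ = 0 := by
  rw [integral_mul_eq_integral_mul_condExp hm hf hf_bound hg]
  refine integral_eq_zero_of_ae ?_
  filter_upwards [hg_zero] with ω hω
  simp [hω]

theorem integral_mul_le_of_condExp_le (hm : m ≤ mΩ) (hf : StronglyMeasurable[m] f)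
    (hf_nonneg : ∀ ω, 0 ≤ f ω) (hf_bound : ∀ᵐ ω ∂μ, ‖f ω‖ ≤ c)
    (hg : Integrable g μ)
    {σ : ℝ} (hg_le : ∀ᵐ ω ∂μ, μ[g | m] ω ≤ σ) :
    ∫ ω, f ω * g ω ∂μ ≤ σ * ∫ ω, f ω ∂μ := by
  have hf_meas : AEStronglyMeasurable f μ := (hf.mono hm).aestronglyMeasurable
  rw [integral_mul_eq_integral_mul_condExp hm hf hf_bound hg, ← integral_const_mul]
  refine integral_mono_ae (integrable_condExp.bdd_mul hf_meas hf_bound)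
    ((Integrable.of_bound hf_meas c hf_bound).const_mul σ) ?_
  filter_upwards [hg_le] with ω hω
  nlinarith [mul_le_mul_of_nonneg_left hω (hf_nonneg ω)]

end CondExp

section Regression

variable {Ω : Type*} {m mΩ : MeasurableSpace Ω} {μ : Measure Ω} [IsFiniteMeasure μ]
  {Y a b : Ω → ℝ} {B : ℝ}

theorem integral_sq_sub_sub_integral_sq_eq (hm : m ≤ mΩ)
    (hab : StronglyMeasurable[m] fun ω => a ω - b ω) (hab_bdd : ∀ ω, |a ω - b ω| ≤ B)
    (hnoise : MemLp (fun ω => Y ω - b ω) 2 μ)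
    (hcenter : μ[fun ω => Y ω - b ω | m] =ᵐ[μ] 0) :
    (∫ ω, (Y ω - a ω) ^ 2 ∂μ) - ∫ ω, (Y ω - b ω) ^ 2 ∂μ
      = ∫ ω, (a ω - b ω) ^ 2 ∂μ := by
  have hab_meas : AEStronglyMeasurable (fun ω => a ω - b ω) μ :=
    (hab.mono hm).aestronglyMeasurable
  have hcross_int : Integrable (fun ω => 2 * ((a ω - b ω) * (Y ω - b ω))) μ :=
    ((hnoise.integrable one_le_two).bdd_mul hab_meas (ae_of_all _ hab_bdd)).const_mul 2
  have hsq_int : Integrable (fun ω => (a ω - b ω) ^ 2) μ :=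
    (MemLp.of_bound hab_meas B (ae_of_all _ hab_bdd)).integrable_sq
  have hcross : ∫ ω, (a ω - b ω) * (Y ω - b ω) ∂μ = 0 :=
    integral_mul_eq_zero_of_condExp_eq_zero hm hab (ae_of_all _ hab_bdd)
      (hnoise.integrable one_le_two) hcenter
  have hexpand : (fun ω => (Y ω - a ω) ^ 2) =
      fun ω => (Y ω - b ω) ^ 2 - 2 * ((a ω - b ω) * (Y ω - b ω)) + (a ω - b ω) ^ 2 := by
    funext ω; ring
  have hnoise_sq : Integrable (fun ω => (Y ω - b ω) ^ 2) μ := hnoise.integrable_sq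
  have hdiff_int : Integrable
      (fun ω => (Y ω - b ω) ^ 2 - 2 * ((a ω - b ω) * (Y ω - b ω))) μ :=
    hnoise_sq.sub hcross_int
  rw [hexpand, integral_add hdiff_int hsq_int, integral_sub hnoise_sq hcross_int,
    integral_const_mul, hcross]
  ring

theorem integral_sq_neg_sq_add_sq_le (hm : m ≤ mΩ)
    (hab : StronglyMeasurable[m] fun ω => a ω - b ω) (hab_bdd : ∀ ω, |a ω - b ω| ≤ B)
    (hnoise : MemLp (fun ω => Y ω - b ω) 2 μ) {σ : ℝ}
    (hvar : ∀ᵐ ω ∂μ, μ[fun ω => (Y ω - b ω) ^ 2 | m] ω ≤ σ ^ 2) :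
    ∫ ω, (-(Y ω - a ω) ^ 2 + (Y ω - b ω) ^ 2) ^ 2 ∂μ
      ≤ (8 * σ ^ 2 + 2 * B ^ 2) * ∫ ω, (a ω - b ω) ^ 2 ∂μ := by
  have hab_sq_bdd : ∀ ω, ‖(a ω - b ω) ^ 2‖ ≤ B ^ 2 := fun ω => by
    rw [norm_pow, Real.norm_eq_abs]
    exact pow_le_pow_left₀ (abs_nonneg _) (hab_bdd ω) 2
  have hab_sq := hab.pow 2
  have hab_sq_meas : AEStronglyMeasurable (fun ω => (a ω - b ω) ^ 2) μ :=
    (hab_sq.mono hm).aestronglyMeasurable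
  have hsq_int : Integrable (fun ω => (a ω - b ω) ^ 2) μ :=
    Integrable.of_bound hab_sq_meas _ (ae_of_all _ hab_sq_bdd)
  have hprod_int : Integrable (fun ω => (a ω - b ω) ^ 2 * (Y ω - b ω) ^ 2) μ :=
    hnoise.integrable_sq.bdd_mul hab_sq_meas (ae_of_all _ hab_sq_bdd)
  have hweighted : ∫ ω, (a ω - b ω) ^ 2 * (Y ω - b ω) ^ 2 ∂μ
      ≤ σ ^ 2 * ∫ ω, (a ω - b ω) ^ 2 ∂μ :=
    integral_mul_le_of_condExp_le hm hab_sq (fun ω => sq_nonneg _) (ae_of_all _ hab_sq_bdd)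
      hnoise.integrable_sq hvar
  calc ∫ ω, (-(Y ω - a ω) ^ 2 + (Y ω - b ω) ^ 2) ^ 2 ∂μ
      ≤ ∫ ω, 8 * ((a ω - b ω) ^ 2 * (Y ω - b ω) ^ 2)
          + 2 * B ^ 2 * (a ω - b ω) ^ 2 ∂μ :=
        integral_mono_of_nonneg (ae_of_all _ fun ω => sq_nonneg _)
          ((hprod_int.const_mul 8).add (hsq_int.const_mul _))
          (ae_of_all _ fun ω => sq_neg_sq_add_sq_le (hab_bdd ω))
    _ = 8 * ∫ ω, (a ω - b ω) ^ 2 * (Y ω - b ω) ^ 2 ∂μ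
          + 2 * B ^ 2 * ∫ ω, (a ω - b ω) ^ 2 ∂μ := by
        rw [integral_add (hprod_int.const_mul 8) (hsq_int.const_mul _), integral_const_mul,
          integral_const_mul]
    _ ≤ (8 * σ ^ 2 + 2 * B ^ 2) * ∫ ω, (a ω - b ω) ^ 2 ∂μ := by linarith

end Regression

theorem sum_sq_Ti_le_general
    {Ω E : Type*} [MeasurableSpace Ω] [MeasurableSpace E]
    (μ : Measure Ω) [IsProbabilityMeasure μ]
    (n : ℕ) (hn : 0 < n)
    (X : Fin n → Ω → E) (Y : Fin n → Ω → ℝ) (ψstar ψ : E → ℝ)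
    (hX : ∀ i, Measurable (X i)) (hY : ∀ i, Measurable (Y i))
    (hψstar : Measurable ψstar) (hψ : Measurable ψ)
    (hident : ∀ i, IdentDistrib (fun ω => (X i ω, Y i ω))
      (fun ω => (X ⟨0, hn⟩ ω, Y ⟨0, hn⟩ ω)) μ μ)
    (σ L C : ℝ)
    (hcenter : ∀ i,
      μ[(fun ω => Y i ω - ψstar (X i ω)) | MeasurableSpace.comap (X i) inferInstance]
        =ᵐ[μ] fun _ => (0 : ℝ))
    (hmom : ∀ i, ∀ k : ℕ, 2 ≤ k →
      ∀ᵐ ω ∂μ,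
        (μ[(fun ω' => |Y i ω' - ψstar (X i ω')| ^ k) |
            MeasurableSpace.comap (X i) inferInstance]) ω
          ≤ (k.factorial : ℝ) / 2 * σ ^ 2 * L ^ (k - 2))
    (hψstar_bdd : ∀ x, |ψstar x| ≤ C) (hψ_bdd : ∀ x, |ψ x| ≤ C)
    (hY_sq : ∀ i, Integrable (fun ω => (Y i ω) ^ 2) μ) :
    ∑ i : Fin n,
        ∫ ω, (-(Y i ω - ψ (X i ω)) ^ 2 + (Y i ω - ψstar (X i ω)) ^ 2) ^ 2 ∂μ
      ≤ 8 * n * (σ ^ 2 + C ^ 2) *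
          ((∫ ω, (Y ⟨0, hn⟩ ω - ψ (X ⟨0, hn⟩ ω)) ^ 2 ∂μ) -
            ∫ ω, (Y ⟨0, hn⟩ ω - ψstar (X ⟨0, hn⟩ ω)) ^ 2 ∂μ) := by
  have hm : ∀ i, MeasurableSpace.comap (X i) inferInstance ≤ ‹MeasurableSpace Ω› :=
    fun i => (hX i).comap_le
  have hdiff : ∀ i, StronglyMeasurable[MeasurableSpace.comap (X i) inferInstance]
      fun ω => ψ (X i ω) - ψstar (X i ω) :=
    fun i => ((hψ.sub hψstar).comp (comap_measurable (X i))).stronglyMeasurable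
  have hdiff_bdd : ∀ x, |ψ x - ψstar x| ≤ 2 * C := fun x =>
    (abs_sub _ _).trans (by linarith [hψ_bdd x, hψstar_bdd x])
  have hnoise : ∀ i, MemLp (fun ω => Y i ω - ψstar (X i ω)) 2 μ := fun i =>
    ((memLp_two_iff_integrable_sq (hY i).aestronglyMeasurable).2 (hY_sq i)).sub
      (MemLp.of_bound (hψstar.comp (hX i)).aestronglyMeasurable C
        (ae_of_all _ fun ω => hψstar_bdd (X i ω)))
  have hvar : ∀ i, ∀ᵐ ω ∂μ, μ[fun ω => (Y i ω - ψstar (X i ω)) ^ 2 |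
      MeasurableSpace.comap (X i) inferInstance] ω ≤ σ ^ 2 := fun i => by
    filter_upwards [hmom i 2 le_rfl] with ω hω
    simpa [sq_abs] using hω
  have hsame : ∀ i, ∫ ω, (ψ (X i ω) - ψstar (X i ω)) ^ 2 ∂μ
      = ∫ ω, (ψ (X ⟨0, hn⟩ ω) - ψstar (X ⟨0, hn⟩ ω)) ^ 2 ∂μ := fun i =>
    ((hident i).comp (((hψ.sub hψstar).comp measurable_fst).pow_const 2)).integral_eq
  rw [integral_sq_sub_sub_integral_sq_eq (hm _) (hdiff _) (fun ω => hdiff_bdd _) (hnoise _)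
    (hcenter _)]
  calc _ ≤ ∑ i : Fin n, (8 * σ ^ 2 + 2 * (2 * C) ^ 2) *
          ∫ ω, (ψ (X i ω) - ψstar (X i ω)) ^ 2 ∂μ :=
        Finset.sum_le_sum fun i _ => integral_sq_neg_sq_add_sq_le (hm i) (hdiff i)
          (fun ω => hdiff_bdd _) (hnoise i) (hvar i)
    _ = _ := by
        simp only [hsame, Finset.sum_const, Finset.card_univ, Fintype.card_fin, nsmul_eq_mul]
        ring

/-- Variance-type bound: under conditional Bernstein moments on the noise and
sup-norm bounds on `ψ` and `ψ*`, the variables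
`T_i = −(Y_i − ψ(X_i))² + (Y_i − ψ*(X_i))²` satisfy
`∑ E[T_i²] ≤ 8 n (σ² + C²) (R(ψ) − R(ψ*))`. -/
theorem sum_sq_Ti_le
    {Ω E : Type*} [MeasurableSpace Ω] [MeasurableSpace E]
    (μ : Measure Ω) [IsProbabilityMeasure μ]
    (n : ℕ) (hn : 0 < n)
    (X : Fin n → Ω → E) (Y : Fin n → Ω → ℝ) (ψstar ψ : E → ℝ)
    (hX : ∀ i, Measurable (X i)) (hY : ∀ i, Measurable (Y i))
    (hψstar : Measurable ψstar) (hψ : Measurable ψ)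
    (hident : ∀ i, IdentDistrib (fun ω => (X i ω, Y i ω))
      (fun ω => (X ⟨0, hn⟩ ω, Y ⟨0, hn⟩ ω)) μ μ)
    (σ L C : ℝ) (hσ : 0 < σ) (hL : 0 < L) (hC : max 1 σ < C)
    (hcenter : ∀ i,
      μ[(fun ω => Y i ω - ψstar (X i ω)) | MeasurableSpace.comap (X i) inferInstance]
        =ᵐ[μ] fun _ => (0 : ℝ))
    (hmom : ∀ i, ∀ k : ℕ, 2 ≤ k →
      ∀ᵐ ω ∂μ,
        (μ[(fun ω' => |Y i ω' - ψstar (X i ω')| ^ k) |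
            MeasurableSpace.comap (X i) inferInstance]) ω
          ≤ (k.factorial : ℝ) / 2 * σ ^ 2 * L ^ (k - 2))
    (hψstar_bdd : ∀ x, |ψstar x| ≤ C) (hψ_bdd : ∀ x, |ψ x| ≤ C)
    (hY_sq : ∀ i, Integrable (fun ω => (Y i ω) ^ 2) μ)
    (hT_sq : ∀ i, Integrable
      (fun ω => (-(Y i ω - ψ (X i ω)) ^ 2 + (Y i ω - ψstar (X i ω)) ^ 2) ^ 2) μ) :
    ∑ i : Fin n,
        ∫ ω, (-(Y i ω - ψ (X i ω)) ^ 2 + (Y i ω - ψstar (X i ω)) ^ 2) ^ 2 ∂μ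
      ≤ 8 * n * (σ ^ 2 + C ^ 2) *
          ((∫ ω, (Y ⟨0, hn⟩ ω - ψ (X ⟨0, hn⟩ ω)) ^ 2 ∂μ) -
            ∫ ω, (Y ⟨0, hn⟩ ω - ψstar (X ⟨0, hn⟩ ω)) ^ 2 ∂μ) :=
  sum_sq_Ti_le_general μ n hn X Y ψstar ψ hX hY hψstar hψ hident σ L C hcenter hmom hψstar_bdd
    hψ_bdd hY_sq
end

section
/- Let α ∈ (0, 1/2) and p ≥ 1. The map η_α(m) = [(1 − α/(1−α)) / (1 − (α/(1−α))^{p+1})] · binom(p, |S(m)|)^{-1} · α^{∑_{j=1}^p m_j}, defined on M = ℕ^p, is a probability distribution: ∑_{m ∈ ℕ^p} η_α(m) = 1. -/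
open scoped ENNReal

private lemma geom_aux {x : ℝ} (hx1 : x ≠ 1) (n : ℕ) (hxn : 1 - x ^ n ≠ 0) :
    (1 - x) / (1 - x ^ n) * ∑ j ∈ Finset.range n, x ^ j = 1 := by
  rw [geom_sum_eq hx1]
  have h1 : x - 1 ≠ 0 := fun h => hx1 (by linarith)
  field_simp
  ring

private lemma tsum_pi_fin (g : ℕ → ℝ≥0∞) : ∀ n : ℕ,
    ∑' f : Fin n → ℕ, ∏ i, g (f i) = (∑' k, g k) ^ n
  | 0 => by
    rw [tsum_eq_single (fun _ => 0) (fun b hb => absurd (Subsingleton.elim b _) hb)]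
    simp
  | n + 1 => by
    rw [← (Fin.consEquiv (fun _ : Fin (n + 1) => ℕ)).tsum_eq, pow_succ']
    rw [← tsum_pi_fin g n, ENNReal.tsum_prod']
    have : ∀ (x : ℕ) (f : Fin n → ℕ),
        (∏ i, g ((Fin.consEquiv (fun _ : Fin (n + 1) => ℕ)) (x, f) i)) =
          g x * ∏ i, g (f i) := by
      intro x f
      rw [Fin.prod_univ_succ]
      rfl
    simp_rw [this, ENNReal.tsum_mul_left, ENNReal.tsum_mul_right]

private lemma tsum_pi_fintype (ι : Type) [Fintype ι] (g : ℕ → ℝ≥0∞) :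
    ∑' f : ι → ℕ, ∏ i, g (f i) = (∑' k, g k) ^ Fintype.card ι := by
  classical
  rw [← tsum_pi_fin g (Fintype.card ι)]
  refine ((Equiv.arrowCongr (Fintype.equivFin ι) (Equiv.refl ℕ)).symm.tsum_eq
    (fun f => ∏ i, g (f i))).symm.trans (tsum_congr fun a => ?_)
  simp only [Equiv.arrowCongr_symm, Equiv.arrowCongr_apply, Equiv.symm_symm, Equiv.refl_symm,
    Function.comp]
  exact Equiv.prod_comp (Fintype.equivFin ι) (fun j => g (a j))

/-- The prior `η_α` on models `m ∈ ℕ^p` of Guedj–Alquier is a probability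
distribution: for `α ∈ (0, 1/2)` and `p ≥ 1`,
`∑_{m ∈ ℕ^p} [(1 − α/(1−α))/(1 − (α/(1−α))^(p+1))] · C(p, |S(m)|)⁻¹ · α^(∑ m_j) = 1`,
where `S(m) = {j : m_j > 0}`. -/
theorem prior_eta_alpha_is_probability (p : ℕ) (hp : 1 ≤ p)
    (α : ℝ) (hα : α ∈ Set.Ioo (0 : ℝ) (1 / 2)) :
    ∑' m : Fin p → ℕ,
      ((1 - α / (1 - α)) / (1 - (α / (1 - α)) ^ (p + 1))) *
        ((p.choose (Finset.univ.filter fun j => 0 < m j).card : ℝ))⁻¹ *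
        α ^ (∑ j, m j) = 1 := by
  classical
  obtain ⟨hα0, hα2⟩ := hα
  have hα1 : α < 1 := by linarith
  have h1α : (0:ℝ) < 1 - α := by linarith
  set β : ℝ := α / (1 - α) with hβ
  have hβ0 : 0 < β := div_pos hα0 h1α
  have hβ1 : β < 1 := by
    rw [div_lt_one h1α]; linarith
  have hβp : β ^ (p + 1) < 1 := pow_lt_one₀ hβ0.le hβ1 (Nat.succ_ne_zero p)
  set c : ℝ := (1 - β) / (1 - β ^ (p + 1)) with hc
  have hc0 : 0 < c := div_pos (by linarith) (by linarith)
  set t : (Fin p → ℕ) → ℝ := fun m =>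
    c * ((p.choose (Finset.univ.filter fun j => 0 < m j).card : ℝ))⁻¹ * α ^ (∑ j, m j) with ht
  have hchoose : ∀ s : ℕ, s ≤ p → (0:ℝ) < (p.choose s : ℝ) := fun s hs => by
    exact_mod_cast Nat.choose_pos hs
  have hcard : ∀ m : Fin p → ℕ, (Finset.univ.filter fun j => 0 < m j).card ≤ p := fun m => by
    simpa using Finset.card_filter_le Finset.univ (fun j => 0 < m j)
  have htnn : ∀ m, 0 ≤ t m := fun m => by
    have := hchoose _ (hcard m)
    positivity
  -- the sigma equivalence
  let e : (Σ S : Finset (Fin p), (↥S → ℕ)) → (Fin p → ℕ) :=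
    fun σ j => if h : j ∈ σ.1 then σ.2 ⟨j, h⟩ + 1 else 0
  have hsupp : ∀ σ : (Σ S : Finset (Fin p), (↥S → ℕ)),
      (Finset.univ.filter fun j => 0 < e σ j) = σ.1 := by
    intro σ
    ext j
    by_cases h : j ∈ σ.1 <;> simp [e, h]
  have hsum : ∀ σ : (Σ S : Finset (Fin p), (↥S → ℕ)),
      (∑ j, e σ j) = σ.1.card + ∑ j : ↥σ.1, σ.2 j := by
    intro σ
    rw [← Finset.sum_subset (Finset.subset_univ σ.1)
      (by intro j _ hj; simp [e, hj])]
    rw [← Finset.sum_attach σ.1 (fun j => e σ j)]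
    have : ∀ j : ↥σ.1, e σ j = σ.2 j + 1 := fun j => by simp [e, j.2]
    simp [this, Finset.sum_add_distrib, add_comm]
  have hbij : Function.Bijective e := by
    constructor
    · rintro ⟨S, a⟩ ⟨T, b⟩ hst
      have hST : S = T :=
        (hsupp ⟨S, a⟩).symm.trans (by rw [hst]; exact hsupp ⟨T, b⟩)
      subst hST
      have hab : a = b := by
        funext j
        have := congrFun hst j
        simpa [e, j.2] using this
      rw [hab]
    · intro m
      refine ⟨⟨Finset.univ.filter fun j => 0 < m j, fun j => m j - 1⟩, ?_⟩
      funext j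
      by_cases h : 0 < m j
      · simp [e, h, Nat.sub_add_cancel h]
      · simp [e, h, Nat.eq_zero_of_not_pos h]
  let E : (Σ S : Finset (Fin p), (↥S → ℕ)) ≃ (Fin p → ℕ) := Equiv.ofBijective e hbij
  -- key ENNReal computation
  have hgeom : ∑' k : ℕ, ENNReal.ofReal α ^ k = ENNReal.ofReal (1 - α)⁻¹ := by
    rw [ENNReal.tsum_geometric, ENNReal.ofReal_inv_of_pos h1α]
    congr 1
    rw [← ENNReal.ofReal_one, ← ENNReal.ofReal_sub _ hα0.le]
  have key : ∑' m : Fin p → ℕ, ENNReal.ofReal (t m) = 1 := by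
    rw [← E.tsum_eq]
    have step1 : ∀ σ : (Σ S : Finset (Fin p), (↥S → ℕ)),
        ENNReal.ofReal (t (E σ)) =
          ENNReal.ofReal (c * ((p.choose σ.1.card : ℝ))⁻¹ * α ^ σ.1.card) *
            ∏ j : ↥σ.1, ENNReal.ofReal α ^ σ.2 j := by
      intro σ
      show ENNReal.ofReal (t (e σ)) = _
      have h1 : (0:ℝ) < (p.choose σ.1.card : ℝ) :=
        hchoose _ (by simpa using Finset.card_le_univ σ.1)
      rw [ht]
      simp only [hsupp σ, hsum σ]
      rw [pow_add, ← mul_assoc, ENNReal.ofReal_mul (by positivity)]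
      congr 1
      rw [ENNReal.ofReal_pow hα0.le, Finset.prod_pow_eq_pow_sum]
    calc ∑' σ, ENNReal.ofReal (t (E σ))
        = ∑' (S : Finset (Fin p)) (a : ↥S → ℕ),
            ENNReal.ofReal (c * ((p.choose S.card : ℝ))⁻¹ * α ^ S.card) *
              ∏ j : ↥S, ENNReal.ofReal α ^ a j := by
          exact (tsum_congr step1).trans (ENNReal.tsum_sigma' _)
      _ = ∑ S : Finset (Fin p),
            ENNReal.ofReal (c * ((p.choose S.card : ℝ))⁻¹ * α ^ S.card) *
              ENNReal.ofReal (1 - α)⁻¹ ^ S.card := by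
          rw [tsum_fintype]
          refine Finset.sum_congr rfl fun S _ => ?_
          rw [ENNReal.tsum_mul_left, tsum_pi_fintype, hgeom, Fintype.card_coe]
      _ = ∑ S : Finset (Fin p), ENNReal.ofReal (c * ((p.choose S.card : ℝ))⁻¹ * β ^ S.card) := by
          refine Finset.sum_congr rfl fun S _ => ?_
          have h1 : (0:ℝ) < (p.choose S.card : ℝ) :=
            hchoose _ (by simpa using Finset.card_le_univ S)
          rw [← ENNReal.ofReal_pow (by positivity), ← ENNReal.ofReal_mul (by positivity)]
          congr 1
          rw [mul_assoc, ← mul_pow, hβ, div_eq_mul_inv]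
      _ = ENNReal.ofReal (∑ S : Finset (Fin p), c * ((p.choose S.card : ℝ))⁻¹ * β ^ S.card) := by
          rw [ENNReal.ofReal_sum_of_nonneg]
          intro S _
          have h1 : (0:ℝ) < (p.choose S.card : ℝ) :=
            hchoose _ (by simpa using Finset.card_le_univ S)
          positivity
      _ = 1 := by
          rw [← ENNReal.ofReal_one]
          congr 1
          have hPS : ∑ S : Finset (Fin p), c * ((p.choose S.card : ℝ))⁻¹ * β ^ S.card
              = ∑ j ∈ Finset.range (p + 1), c * β ^ j := by
            rw [← Finset.powerset_univ, Finset.sum_powerset]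
            rw [Finset.card_univ, Fintype.card_fin]
            refine Finset.sum_congr rfl fun j hj => ?_
            have hcardT : ∀ T ∈ Finset.powersetCard j (Finset.univ : Finset (Fin p)),
                T.card = j := fun T hT => (Finset.mem_powersetCard.mp hT).2
            rw [Finset.sum_congr rfl fun T hT => by rw [hcardT T hT]]
            rw [Finset.sum_const, Finset.card_powersetCard, Finset.card_univ, Fintype.card_fin,
              nsmul_eq_mul]
            have hj' : j ≤ p := by
              have := Finset.mem_range.mp hj; omega
            have h1 : ((p.choose j : ℝ)) ≠ 0 := ne_of_gt (hchoose j hj')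
            calc ((p.choose j : ℝ)) * (c * ((p.choose j : ℝ))⁻¹ * β ^ j)
                = ((p.choose j : ℝ) * ((p.choose j : ℝ))⁻¹) * (c * β ^ j) := by ring
              _ = c * β ^ j := by rw [mul_inv_cancel₀ h1, one_mul]
          rw [hPS, ← Finset.mul_sum, hc]
          exact geom_aux (ne_of_lt hβ1) (p + 1) (ne_of_gt (by linarith))
  have h1 : ∀ m, t m = (ENNReal.ofReal (t m)).toReal :=
    fun m => (ENNReal.toReal_ofReal (htnn m)).symm
  calc ∑' m, t m = ∑' m, (ENNReal.ofReal (t m)).toReal := tsum_congr h1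
    _ = (∑' m, ENNReal.ofReal (t m)).toReal :=
        (ENNReal.tsum_toReal_eq fun _ => ENNReal.ofReal_ne_top).symm
    _ = 1 := by rw [key, ENNReal.toReal_one]
end
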